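/- arXiv:2212.13081 — 6 statements merged into one kernel-verified Lean document; each statement's English description precedes it below -/
import Mathlib

section
/- In the free group F(x₁, x₂), let U_α = ⟨x₁, x₂x₁⁻¹x₂⁻¹⟩ and m_V = x₂x₁⁻¹x₂⁻¹x₁. For any a ∈ F(x₁,x₂), the intersection a⟨m_V⟩a⁻¹ ∩ U_α is nontrivial if and only if a ∈ U_α. -/
open FreeGroup

noncomputable def x₁ : FreeGroup (Fin 2) := FreeGroup.of 0
noncomputable def x₂ : FreeGroup (Fin 2) := FreeGroup.of 1

noncomputable def Uα : Subgroup (FreeGroup (Fin 2)) :=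
  Subgroup.closure {x₁, x₂ * x₁⁻¹ * x₂⁻¹}

noncomputable def mV : FreeGroup (Fin 2) := x₂ * x₁⁻¹ * x₂⁻¹ * x₁

/-!
With `tⱼ = x₂ʲ x₁ x₂⁻ʲ`, the free group `F(x₁, x₂)` is the semidirect product `F(tⱼ : j ∈ ℤ) ⋊ ℤ`,
with `ℤ` shifting indices. On the first factor, `U_α = ⟨t₀, t₁⟩` and `m_V = t₁⁻¹ t₀`. If `a = k · z`
conjugates `m_Vⁿ`, `n ≠ 0`, into `U_α`, then `k (t_{z+1}⁻¹ t_z)ⁿ k⁻¹ ∈ ⟨t₀, t₁⟩`. Counting the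
exponents of the letters `t_z` and `t_{z+1}` forces `z = 0`. Then `k ∈ ⟨t₀, t₁⟩`, because a
subgroup generated by part of a free basis is malnormal.
-/

open Subgroup Multiplicative SemidirectProduct

namespace FreeGroup

variable {α : Type*} {S : Set α}

theorem mk_mem_closure_image_of : ∀ {L : List (α × Bool)}, (∀ p ∈ L, p.1 ∈ S) →
    mk L ∈ closure (of '' S)
  | [], _ => one_mem _
  | (a, b) :: L, hL => by
    have ha : of a ∈ closure (of '' S) := subset_closure ⟨a, hL _ List.mem_cons_self, rfl⟩
    have hL' := mk_mem_closure_image_of fun p hp => hL p (List.mem_cons_of_mem _ hp)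
    rw [← List.singleton_append, ← mul_mk]
    cases b
    · exact mul_mem (inv_mem ha) hL'
    · exact mul_mem ha hL'

theorem mem_closure_image_of_iff [DecidableEq α] {g : FreeGroup α} :
    g ∈ closure (of '' S) ↔ ∀ p ∈ g.toWord, p.1 ∈ S := by
  refine ⟨fun hg => ?_, fun h => mk_toWord (x := g) ▸ mk_mem_closure_image_of h⟩
  induction hg using closure_induction with
  | mem _ hx =>
    obtain ⟨a, ha, rfl⟩ := hx
    simpa [toWord_of] using ha
  | one => simp
  | mul x y _ _ hx hy =>
    intro p hp
    simpa using (List.mem_append.mp ((toWord_mul_sublist x y).subset hp)).imp (hx p) (hy p)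
  | inv x _ hx =>
    intro p hp
    obtain ⟨q, hq, rfl⟩ := List.mem_map.mp (List.mem_reverse.mp (toWord_inv x ▸ hp))
    exact hx q hq

theorem IsReduced.append {L₁ L₂ : List (α × Bool)} (h₁ : IsReduced L₁) (h₂ : IsReduced L₂)
    (h : ∀ a ∈ L₁.getLast?, ∀ b ∈ L₂.head?, a.1 ≠ b.1) : IsReduced (L₁ ++ L₂) :=
  List.isChain_append.mpr ⟨h₁, h₂, fun a ha b hb hab => absurd hab (h a ha b hb)⟩

theorem toWord_mk_mul_mul_inv_mk [DecidableEq α] {A : List (α × Bool)} (hA : IsReduced A)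
    {g : FreeGroup α} (hg : g ≠ 1) (hAg : ∀ a ∈ A.getLast?, ∀ b ∈ g.toWord, a.1 ≠ b.1) :
    (mk A * g * (mk A)⁻¹).toWord = A ++ g.toWord ++ invRev A := by
  have hA' : IsReduced (invRev A) := by
    simpa [toWord_inv, toWord_mk, reduce_invRev, hA.reduce_eq] using
      isReduced_toWord (x := (mk A)⁻¹)
  have hg' : g.toWord ≠ [] := by rwa [Ne, toWord_eq_nil_iff]
  rw [← mk_toWord (x := g), inv_mk, mul_mk, mul_mk, toWord_mk, mk_toWord]
  refine IsReduced.reduce_eq (IsReduced.append_overlap ?_ ?_ hg')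
  · exact hA.append isReduced_toWord fun a ha b hb => hAg a ha b (List.mem_of_mem_head? hb)
  · refine isReduced_toWord.append hA' fun b hb a ha => ?_
    simp only [invRev, List.head?_reverse, List.getLast?_map, Option.mem_def,
      Option.map_eq_some_iff] at ha
    obtain ⟨a', ha', rfl⟩ := ha
    exact (hAg a' ha' b (List.mem_of_mem_getLast? hb)).symm

/- Write `k = mk A * mk B` with `B` the longest suffix of `k.toWord` whose letters lie in `S`.
The reduced word of `k * h * k⁻¹` is then `A ++ (mk B * h * (mk B)⁻¹).toWord ++ invRev A`, which
contains the last letter of `A`, a letter outside `S`. -/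
theorem mem_closure_image_of_of_conj_mem {h k : FreeGroup α} (hh : h ∈ closure (of '' S))
    (h1 : h ≠ 1) (hk : k * h * k⁻¹ ∈ closure (of '' S)) : k ∈ closure (of '' S) := by
  classical
  by_contra hk'
  let inS : α × Bool → Bool := fun p => p.1 ∈ S
  set A := k.toWord.rdropWhile inS
  set B := k.toWord.rtakeWhile inS
  have hA : A ≠ [] := by
    refine fun hnil => hk' (mem_closure_image_of_iff.mpr fun p hp => ?_)
    simpa [inS] using List.rdropWhile_eq_nil_iff.mp hnil p hp
  have hAlast : (A.getLast hA).1 ∉ S := by simpa [inS] using List.rdropWhile_last_not _ _ hA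
  have hB : mk B ∈ closure (of '' S) :=
    mk_mem_closure_image_of fun p hp => by simpa [inS] using List.mem_rtakeWhile_imp hp
  have hh' : mk B * h * (mk B)⁻¹ ∈ closure (of '' S) := mul_mem (mul_mem hB hh) (inv_mem hB)
  have hconj : k * h * k⁻¹ = mk A * (mk B * h * (mk B)⁻¹) * (mk A)⁻¹ := by
    rw [show k = mk A * mk B by rw [mul_mk, List.rdropWhile_append_rtakeWhile, mk_toWord]]
    group
  have hAred : IsReduced A := isReduced_toWord.infix (List.rdropWhile_prefix _ _).isInfix
  have hword := toWord_mk_mul_mul_inv_mk (g := mk B * h * (mk B)⁻¹) hAred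
    (by rwa [Ne, mul_inv_eq_one, mul_eq_left]) fun a ha b hb => by
      rw [List.getLast?_eq_some_getLast hA, Option.mem_some_iff] at ha
      subst ha
      exact fun hab => hAlast (hab ▸ mem_closure_image_of_iff.mp hh' b hb)
  refine hAlast (mem_closure_image_of_iff.mp hk _ ?_)
  rw [hconj, hword]
  exact List.mem_append_left _ (List.mem_append_left _ (List.getLast_mem hA))

section exponentSum

variable [DecidableEq α]

def exponentSum (r : α) : FreeGroup α →* Multiplicative ℤ :=
  FreeGroup.lift (Pi.mulSingle r (ofAdd 1))

theorem exponentSum_of (r a : α) : exponentSum r (of a) = if a = r then ofAdd 1 else 1 := by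
  simp [exponentSum, Pi.mulSingle_apply]

theorem exponentSum_eq_one_of_mem_closure {r : α} (hr : r ∉ S) {g : FreeGroup α}
    (hg : g ∈ closure (of '' S)) : exponentSum r g = 1 := by
  suffices closure (of '' S) ≤ (exponentSum r).ker from this hg
  rw [closure_le]
  rintro _ ⟨a, ha, rfl⟩
  simp [exponentSum_of, show a ≠ r by rintro rfl; exact hr ha]

theorem exponentSum_eq_one_of_conj_zpow_mem {r : α} (hr : r ∉ S) {g k : FreeGroup α} {n : ℤ}
    (hn : n ≠ 0) (h : k * g ^ n * k⁻¹ ∈ closure (of '' S)) : exponentSum r g = 1 := by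
  have := exponentSum_eq_one_of_mem_closure hr h
  rw [_root_.map_mul, _root_.map_mul, _root_.map_inv, mul_comm, inv_mul_cancel_left,
    map_zpow] at this
  exact (IsMulTorsionFree.zpow_eq_one_iff_left hn).mp this

end exponentSum

def shift : Multiplicative ℤ →* MulAut (FreeGroup ℤ) where
  toFun z := freeGroupCongr (Equiv.addRight z.toAdd)
  map_one' := by ext; simp
  map_mul' z w := by
    ext
    simp only [MulAut.mul_apply, freeGroupCongr_apply, map.comp]
    congr 1
    ext
    simp [add_comm z.toAdd]

theorem shift_of (z : Multiplicative ℤ) (j : ℤ) : shift z (of j) = of (j + z.toAdd) := by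
  simp [shift]

theorem eq_one_and_mem_of_conj_zpow_shift_mem {z : Multiplicative ℤ} {k : FreeGroup ℤ} {n : ℤ}
    (hn : n ≠ 0) (h : k * shift z ((of 1)⁻¹ * of 0) ^ n * k⁻¹ ∈ closure (of '' {0, 1})) :
    z = 1 ∧ k ∈ closure (of '' {0, 1}) := by
  have h0 : z.toAdd ∈ ({0, 1} : Set ℤ) := by
    by_contra hr
    simpa [shift_of, exponentSum_of] using exponentSum_eq_one_of_conj_zpow_mem hr hn h
  have h1 : 1 + z.toAdd ∈ ({0, 1} : Set ℤ) := by
    by_contra hr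
    simpa [shift_of, exponentSum_of] using exponentSum_eq_one_of_conj_zpow_mem hr hn h
  obtain rfl : z = 1 := by
    rw [← toAdd_eq_zero]
    simp only [Set.mem_insert_iff, Set.mem_singleton_iff] at h0 h1
    omega
  rw [_root_.map_one, MulAut.one_apply] at h
  have hg : (of 1)⁻¹ * of (0 : ℤ) ∈ closure (of '' {0, 1}) :=
    mul_mem (inv_mem (subset_closure ⟨1, by simp, rfl⟩)) (subset_closure ⟨0, by simp, rfl⟩)
  have hgn : ((of 1)⁻¹ * of (0 : ℤ)) ^ n ≠ 1 := by
    rw [Ne, IsMulTorsionFree.zpow_eq_one_iff_left hn, inv_mul_eq_one]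
    exact fun h => one_ne_zero (of_injective h)
  exact ⟨rfl, mem_closure_image_of_of_conj_mem (zpow_mem hg n) hgn h⟩

end FreeGroup

theorem SemidirectProduct.inr_mul_inl_mul_inr_inv {N G : Type*} [Group N] [Group G]
    {φ : G →* MulAut N} (g : G) (n : N) : (inr g * inl n * (inr g)⁻¹ : N ⋊[φ] G) = inl (φ g n) := by
  rw [inl_aut, _root_.map_inv]

noncomputable def toSemidirect : FreeGroup (Fin 2) →* FreeGroup ℤ ⋊[shift] Multiplicative ℤ :=
  FreeGroup.lift ![inl (of 0), inr (ofAdd 1)]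

noncomputable def ofSemidirect : FreeGroup ℤ ⋊[shift] Multiplicative ℤ →* FreeGroup (Fin 2) :=
  SemidirectProduct.lift (FreeGroup.lift fun j => x₂ ^ j * x₁ * x₂ ^ (-j)) (zpowersHom _ x₂)
    fun z => FreeGroup.ext_hom _ _ fun j => by
      simp only [MonoidHom.comp_apply, MulEquiv.coe_toMonoidHom, shift_of, lift_apply_of,
        zpowersHom_apply, MulAut.conj_apply]
      group

theorem ofSemidirect_toSemidirect (a : FreeGroup (Fin 2)) :
    ofSemidirect (toSemidirect a) = a := by
  suffices ofSemidirect.comp toSemidirect = MonoidHom.id _ from DFunLike.congr_fun this a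
  refine FreeGroup.ext_hom _ _ fun i => ?_
  fin_cases i <;> simp [toSemidirect, ofSemidirect, x₁, x₂]

theorem ofSemidirect_inl_of (j : ℤ) : ofSemidirect (inl (of j)) = x₂ ^ j * x₁ * x₂ ^ (-j) := by
  simp [ofSemidirect]

theorem toSemidirect_mV : toSemidirect mV = inl ((of 1)⁻¹ * of 0) := by
  simp only [mV, x₁, x₂, toSemidirect, _root_.map_mul, _root_.map_inv, lift_apply_of]
  ext <;> simp [shift_of]

theorem toSemidirect_mem_of_mem_Uα {a : FreeGroup (Fin 2)} (ha : a ∈ Uα) :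
    toSemidirect a ∈ (closure (of '' {0, 1})).map inl := by
  suffices Uα ≤ ((closure (of '' {0, 1})).map inl).comap toSemidirect from this ha
  rw [Uα, closure_le]
  rintro _ (rfl | rfl)
  · exact ⟨of 0, subset_closure ⟨0, by simp, rfl⟩, by simp [toSemidirect, x₁]⟩
  · refine ⟨(of 1)⁻¹, inv_mem (subset_closure ⟨1, by simp, rfl⟩), ?_⟩
    simp only [x₁, x₂, toSemidirect, _root_.map_mul, _root_.map_inv, lift_apply_of]
    ext <;> simp [shift_of]

theorem ofSemidirect_inl_mem_Uα {k : FreeGroup ℤ} (hk : k ∈ closure (of '' {0, 1})) :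
    ofSemidirect (inl k) ∈ Uα := by
  suffices closure (of '' {0, 1}) ≤ Uα.comap (ofSemidirect.comp inl) from this hk
  rw [closure_le]
  rintro _ ⟨j, hj | hj, rfl⟩ <;> subst hj <;>
    simp only [SetLike.mem_coe, mem_comap, MonoidHom.comp_apply, ofSemidirect_inl_of]
  · exact subset_closure (Set.mem_insert _ _)
  · have : x₂ ^ (1 : ℤ) * x₁ * x₂ ^ (-1 : ℤ) = (x₂ * x₁⁻¹ * x₂⁻¹)⁻¹ := by group
    rw [this]
    exact inv_mem (subset_closure (Set.mem_insert_of_mem _ rfl))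

theorem mem_Uα_of_conj_zpow_mV_mem {a : FreeGroup (Fin 2)} {n : ℤ} (hn : n ≠ 0)
    (h : a * mV ^ n * a⁻¹ ∈ Uα) : a ∈ Uα := by
  obtain ⟨k, z, ha⟩ : ∃ k z, toSemidirect a = inl k * inr z :=
    ⟨_, _, (inl_left_mul_inr_right _).symm⟩
  have hconj : toSemidirect (a * mV ^ n * a⁻¹)
      = inl (k * shift z ((of 1)⁻¹ * of 0) ^ n * k⁻¹) := by
    rw [_root_.map_mul, _root_.map_mul, _root_.map_inv, map_zpow, toSemidirect_mV, ha,
      ← map_zpow, _root_.map_mul, _root_.map_mul, _root_.map_inv, ← map_zpow,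
      ← inr_mul_inl_mul_inr_inv]
    group
  obtain ⟨k', hk', hkk'⟩ := toSemidirect_mem_of_mem_Uα h
  rw [hconj, inl_inj] at hkk'
  obtain ⟨rfl, hk⟩ := eq_one_and_mem_of_conj_zpow_shift_mem hn (hkk' ▸ hk')
  rw [← ofSemidirect_toSemidirect a, ha, _root_.map_one, mul_one]
  exact ofSemidirect_inl_mem_Uα hk

theorem mV_mem_Uα : mV ∈ Uα :=
  mul_mem (subset_closure (Set.mem_insert_of_mem _ rfl)) (subset_closure (Set.mem_insert _ _))

theorem mV_ne_one : mV ≠ 1 := by decide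

/-- `a⟨m_V⟩a⁻¹ ∩ U_α` is nontrivial iff `a ∈ U_α`. -/
theorem conj_zpowers_mV_inter_Ualpha_nontrivial_iff (a : FreeGroup (Fin 2)) :
    Subgroup.map ((MulAut.conj a).toMonoidHom) (Subgroup.zpowers mV) ⊓ Uα ≠ ⊥ ↔ a ∈ Uα := by
  simp only [Ne, eq_bot_iff_forall, not_forall, exists_prop]
  constructor
  · rintro ⟨_, ⟨⟨_, ⟨n, rfl⟩, rfl⟩, hn⟩, hne⟩
    have hn0 : n ≠ 0 := by
      rintro rfl
      simp at hne
    exact mem_Uα_of_conj_zpow_mV_mem hn0 (by simpa using hn)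
  · intro ha
    refine ⟨a * mV * a⁻¹, ⟨⟨mV, mem_zpowers mV, rfl⟩, ?_⟩, ?_⟩
    · exact Uα.mul_mem (Uα.mul_mem ha mV_mem_Uα) (Uα.inv_mem ha)
    · simp [mV_ne_one]
end

section
/- In the free group F(x₁, x₂), let U_α = ⟨x₁, x₂x₁⁻¹x₂⁻¹⟩. For any a ∈ F(x₁,x₂), the intersection a⟨x₁⟩a⁻¹ ∩ U_α is nontrivial if and only if a = u·x₂^ε·x₁^k for some u ∈ U_α, ε ∈ {0,1}, and k ∈ ℤ. -/
/-!
`Uα` is the stabilizer of the base point for the action of `F(x₁, x₂)` on the left cosets of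
`Uα`, modelled on canonical representatives: reduced words that do not end in `x₁^±1` or in
`x₁^±1 x₂⁻¹`. A letter acts by reduced left multiplication, except that `x₁^±1` fixes the two
"core" cosets `Uα` and `x₂⁻¹ Uα` (the two `x₁`-loops of the Schreier graph); Schreier's
rewriting argument shows that the stabilizer is no larger than `Uα`.

Since `a⟨x₁⟩a⁻¹ ∩ Uα` is the conjugate of `⟨x₁⟩ ∩ Stab(a⁻¹ Uα)`, it remains to see that no
nontrivial power of `x₁` fixes a coset off the core: there `x₁` raises the exponent of the
leading `x₁`-power of the representative by one.
-/

open FreeGroup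

namespace FreeGroup

theorem mk_singleton_inv {α : Type*} (x : α × Bool) : (mk [x])⁻¹ = mk [(x.1, !x.2)] := by
  simp [inv_mk, invRev]

variable {α : Type*} [DecidableEq α]

theorem toWord_mk_singleton_mul_of_eq_cons {x : α × Bool} {w : FreeGroup α}
    {L : List (α × Bool)} (h : w.toWord = (x.1, !x.2) :: L) : (mk [x] * w).toWord = L := by
  rw [toWord_mul, toWord_mk, reduce_singleton, List.singleton_append, reduce.cons,
    reduce_toWord, h]
  simp

theorem toWord_mk_singleton_mul_of_ne_cons {x : α × Bool} {w : FreeGroup α}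
    (h : ∀ L, w.toWord ≠ (x.1, !x.2) :: L) : (mk [x] * w).toWord = x :: w.toWord := by
  rw [toWord_mul, toWord_mk, reduce_singleton, List.singleton_append, reduce.cons,
    reduce_toWord]
  rcases hw : w.toWord with _ | ⟨y, L⟩
  · rfl
  · have hy : ¬ (x.1 = y.1 ∧ x.2 = !y.2) := fun hxy =>
      h L (by rw [hw, hxy.1, hxy.2, Bool.not_not])
    simp [hy]

end FreeGroup

namespace MulAction

variable {G α : Type*} [Group G] [MulAction G α]

theorem stabilizer_le_of_forall_mem_of_closure_eq_top {H : Subgroup G} {X : Set G}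
    (hX : Subgroup.closure X = ⊤) (rep : α → G)
    (hrep : ∀ x ∈ X, ∀ b, (rep (x • b))⁻¹ * x * rep b ∈ H) {a : α} (ha : rep a ∈ H) :
    stabilizer G a ≤ H := by
  have hconj (g : G) : ∀ b, (rep (g • b))⁻¹ * g * rep b ∈ H := by
    induction (hX ▸ Subgroup.mem_top g : g ∈ Subgroup.closure X) using
      Subgroup.closure_induction with
    | mem x hx => exact hrep x hx
    | one => simp
    | mul x y _ _ hx hy =>
      intro b
      convert H.mul_mem (hx (y • b)) (hy b) using 1
      rw [mul_smul]
      group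
    | inv x _ hx =>
      intro b
      convert H.inv_mem (hx (x⁻¹ • b)) using 1
      rw [smul_inv_smul]
      group
  intro g hg
  have hga := hconj g a
  rw [mem_stabilizer_iff.mp hg] at hga
  simpa [mul_assoc] using H.mul_mem (H.mul_mem ha hga) (H.inv_mem ha)

theorem map_conj_inf_stabilizer_ne_bot_iff (K : Subgroup G) (g : G) (a : α) :
    K.map (MulAut.conj g).toMonoidHom ⊓ stabilizer G a ≠ ⊥ ↔
      K ⊓ stabilizer G (g⁻¹ • a) ≠ ⊥ := by
  conv_lhs => rw [← smul_inv_smul g a, stabilizer_smul_eq_stabilizer_map_conj,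
    ← Subgroup.map_inf_eq _ _ _ (MulAut.conj g).injective]
  rw [Ne, Subgroup.map_eq_bot_iff_of_injective _ (MulAut.conj g).injective]

end MulAction

namespace Uα

open MulAction

lemma x₁_mem : x₁ ∈ Uα := Subgroup.subset_closure (Set.mem_insert _ _)

lemma x₂_mul_x₁_mul_x₂_inv_mem : x₂ * x₁ * x₂⁻¹ ∈ Uα := by
  have h := Uα.inv_mem (Subgroup.subset_closure (Set.mem_insert_of_mem _ rfl))
  rwa [show (x₂ * x₁⁻¹ * x₂⁻¹)⁻¹ = x₂ * x₁ * x₂⁻¹ by group] at h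

lemma toWord_x₂_inv : x₂⁻¹.toWord = [(1, false)] := by
  simp [x₂, invRev]

def IsCanonical (L : List (Fin 2 × Bool)) : Prop :=
  ∀ b, ¬ [(0, b)] <:+ L ∧ ¬ [(0, b), (1, false)] <:+ L

-- `w` stands for the coset `w Uα`.
@[ext]
structure Transversal where
  val : FreeGroup (Fin 2)
  isCanonical : IsCanonical val.toWord

noncomputable def step (x : Fin 2 × Bool) (w : FreeGroup (Fin 2)) : FreeGroup (Fin 2) :=
  if x.1 = 0 ∧ (w = 1 ∨ w = x₂⁻¹) then w else mk [x] * w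

lemma isCanonical_toWord_step (x : Fin 2 × Bool) {w : FreeGroup (Fin 2)}
    (hw : IsCanonical w.toWord) : IsCanonical (step x w).toWord := by
  unfold step
  split_ifs with hcore
  · exact hw
  by_cases hcancel : ∃ L, w.toWord = (x.1, !x.2) :: L
  · obtain ⟨L, hL⟩ := hcancel
    rw [toWord_mk_singleton_mul_of_eq_cons hL]
    rw [hL] at hw
    exact fun b => ⟨fun h => (hw b).1 (h.trans (List.suffix_cons _ _)),
      fun h => (hw b).2 (h.trans (List.suffix_cons _ _))⟩
  · push Not at hcancel
    rw [toWord_mk_singleton_mul_of_ne_cons hcancel]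
    intro b
    simp only [List.suffix_cons_iff, List.cons.injEq, not_or]
    refine ⟨⟨?_, (hw b).1⟩, ⟨?_, (hw b).2⟩⟩
    · rintro ⟨rfl, hnil⟩
      exact hcore ⟨rfl, Or.inl (toWord_eq_nil_iff.mp hnil.symm)⟩
    · rintro ⟨rfl, h⟩
      exact hcore ⟨rfl, Or.inr (toWord_injective (h.symm.trans toWord_x₂_inv.symm))⟩

lemma step_inv_step (x : Fin 2 × Bool) {w : FreeGroup (Fin 2)} (hw : IsCanonical w.toWord) :
    step (x.1, !x.2) (step x w) = w := by
  by_cases hcore : x.1 = 0 ∧ (w = 1 ∨ w = x₂⁻¹)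
  · simp [step, hcore]
  -- otherwise `w` would be `x₁^±1` or `x₁^±1 x₂⁻¹`, which are not canonical
  have hcore' : ¬ (x.1 = 0 ∧ (mk [x] * w = 1 ∨ mk [x] * w = x₂⁻¹)) := by
    rintro ⟨hx, h | h⟩ <;> rw [← eq_inv_mul_iff_mul_eq, mk_singleton_inv] at h <;> subst h
    · rw [mul_one, toWord_mk, reduce_singleton, hx] at hw
      exact (hw _).1 List.suffix_rfl
    · rw [toWord_mk_singleton_mul_of_ne_cons (fun L => by rw [toWord_x₂_inv]; simp [hx]),
        toWord_x₂_inv, hx] at hw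
      exact (hw _).2 List.suffix_rfl
  simp only [step, if_neg hcore, if_neg hcore', ← mul_assoc, ← mk_singleton_inv,
    inv_mul_cancel, one_mul]

noncomputable def stepPerm (x : Fin 2 × Bool) : Equiv.Perm Transversal where
  toFun w := ⟨step x w.val, isCanonical_toWord_step x w.isCanonical⟩
  invFun w := ⟨step (x.1, !x.2) w.val, isCanonical_toWord_step _ w.isCanonical⟩
  left_inv w := Transversal.ext (step_inv_step x w.isCanonical)
  right_inv w := Transversal.ext (by simpa using step_inv_step (x.1, !x.2) w.isCanonical)

noncomputable def toPerm : FreeGroup (Fin 2) →* Equiv.Perm Transversal :=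
  FreeGroup.lift fun i => stepPerm (i, true)

noncomputable instance : MulAction (FreeGroup (Fin 2)) Transversal :=
  MulAction.compHom Transversal toPerm

lemma val_of_smul (i : Fin 2) (w : Transversal) : (of i • w).val = step (i, true) w.val := by
  change (toPerm (of i) w).val = _
  rw [toPerm, lift_apply_of]
  rfl

lemma val_of_inv_smul (i : Fin 2) (w : Transversal) :
    ((of i)⁻¹ • w).val = step (i, false) w.val := by
  change (toPerm (of i)⁻¹ w).val = _
  rw [_root_.map_inv, toPerm, lift_apply_of]
  rfl

def v₀ : Transversal := ⟨1, fun _ => by simp⟩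

noncomputable def v₁ : Transversal :=
  ⟨x₂⁻¹, fun _ => by rw [toWord_x₂_inv]; simp [List.suffix_cons_iff]⟩

lemma x₁_smul_v₀ : x₁ • v₀ = v₀ := Transversal.ext (by rw [x₁, val_of_smul]; simp [step, v₀])

lemma x₁_smul_v₁ : x₁ • v₁ = v₁ := Transversal.ext (by rw [x₁, val_of_smul]; simp [step, v₁])

lemma x₂_inv_smul_v₀ : x₂⁻¹ • v₀ = v₁ := Transversal.ext (by
  rw [x₂, val_of_inv_smul]
  simp [step, v₀, v₁, x₂, of, inv_mk, invRev])

lemma eq_stabilizer : Uα = stabilizer (FreeGroup (Fin 2)) v₀ := by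
  refine le_antisymm ?_ ?_
  · rw [Uα, Subgroup.closure_le]
    rintro g (rfl | rfl)
    · exact x₁_smul_v₀
    · rw [SetLike.mem_coe, mem_stabilizer_iff, mul_smul, mul_smul, x₂_inv_smul_v₀,
        inv_smul_eq_iff.mpr x₁_smul_v₁.symm, ← x₂_inv_smul_v₀, smul_inv_smul]
  · refine stabilizer_le_of_forall_mem_of_closure_eq_top (closure_range_of _) Transversal.val
      ?_ Uα.one_mem
    rintro _ ⟨i, rfl⟩ w
    rw [val_of_smul, step]
    split_ifs with hcore
    · obtain ⟨rfl, hw | hw⟩ := hcore <;> rw [hw]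
      · simpa [x₁] using x₁_mem
      · simpa [x₁] using x₂_mul_x₁_mul_x₂_inv_mem
    · change (of i * w.val)⁻¹ * of i * w.val ∈ Uα
      rw [mul_assoc, inv_mul_cancel]
      exact Uα.one_mem

def IsCore (w : Transversal) : Prop := w = v₀ ∨ w = v₁

lemma x₁_zpow_smul_of_isCore {w : Transversal} (hw : IsCore w) (n : ℤ) : x₁ ^ n • w = w := by
  have hx₁ : x₁ ∈ stabilizer _ w := by
    rcases hw with rfl | rfl
    exacts [x₁_smul_v₀, x₁_smul_v₁]
  exact (stabilizer _ w).zpow_mem hx₁ n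

lemma isCore_x₁_zpow_smul_iff {w : Transversal} (n : ℤ) : IsCore (x₁ ^ n • w) ↔ IsCore w := by
  refine ⟨fun h => ?_, fun h => by rwa [x₁_zpow_smul_of_isCore h]⟩
  have hback := x₁_zpow_smul_of_isCore h (-n)
  rw [smul_smul, ← zpow_add, neg_add_cancel, zpow_zero, one_smul] at hback
  rwa [← hback] at h

def leadExp : List (Fin 2 × Bool) → ℤ
  | [] => 0
  | x :: L => if x.1 = 0 then leadExp L + (if x.2 then 1 else -1) else 0

lemma leadExp_x₁_smul {w : Transversal} (hw : ¬IsCore w) :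
    leadExp (x₁ • w).val.toWord = leadExp w.val.toWord + 1 := by
  have hmoved : ¬ (((0, true) : Fin 2 × Bool).1 = 0 ∧ (w.val = 1 ∨ w.val = x₂⁻¹)) := by
    rintro ⟨-, h | h⟩
    exacts [hw (Or.inl (Transversal.ext h)), hw (Or.inr (Transversal.ext h))]
  rw [x₁, val_of_smul, step, if_neg hmoved]
  by_cases hcancel : ∃ L, w.val.toWord = (0, false) :: L
  · obtain ⟨L, hL⟩ := hcancel
    rw [toWord_mk_singleton_mul_of_eq_cons (x := (0, true)) hL, hL]
    simp [leadExp]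
  · push Not at hcancel
    rw [toWord_mk_singleton_mul_of_ne_cons (x := (0, true)) hcancel]
    simp [leadExp]

lemma leadExp_x₁_zpow_smul {w : Transversal} (hw : ¬IsCore w) (n : ℤ) :
    leadExp (x₁ ^ n • w).val.toWord = leadExp w.val.toWord + n := by
  induction n using Int.induction_on with
  | zero => simp
  | succ k ih =>
    rw [add_comm (k : ℤ) 1, zpow_one_add, mul_smul,
      leadExp_x₁_smul ((isCore_x₁_zpow_smul_iff _).not.mpr hw), ih]
    ring
  | pred k ih =>
    have h := leadExp_x₁_smul ((isCore_x₁_zpow_smul_iff (-k - 1)).not.mpr hw)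
    rw [smul_smul, ← zpow_one_add, show 1 + (-(k : ℤ) - 1) = -k by ring, ih] at h
    linarith

theorem x₁_zpow_smul_eq_self_iff {n : ℤ} (hn : n ≠ 0) {w : Transversal} :
    x₁ ^ n • w = w ↔ IsCore w := by
  refine ⟨fun h => ?_, fun h => x₁_zpow_smul_of_isCore h n⟩
  by_contra hw
  have hexp := leadExp_x₁_zpow_smul hw n
  rw [h] at hexp
  omega

theorem zpowers_x₁_inf_stabilizer_ne_bot_iff (w : Transversal) :
    Subgroup.zpowers x₁ ⊓ stabilizer _ w ≠ ⊥ ↔ IsCore w := by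
  rw [Ne, Subgroup.eq_bot_iff_forall]
  push Not
  constructor
  · rintro ⟨g, hg, hg1⟩
    obtain ⟨hz, hs⟩ := Subgroup.mem_inf.mp hg
    obtain ⟨n, rfl⟩ := Subgroup.mem_zpowers_iff.mp hz
    have hn : n ≠ 0 := by
      rintro rfl
      exact hg1 (zpow_zero _)
    exact (x₁_zpow_smul_eq_self_iff hn).mp hs
  · intro hw
    refine ⟨x₁, Subgroup.mem_inf.mpr ⟨Subgroup.mem_zpowers _, ?_⟩, of_ne_one _⟩
    simpa using x₁_zpow_smul_of_isCore hw 1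

lemma isCore_inv_smul_v₀_iff (a : FreeGroup (Fin 2)) :
    IsCore (a⁻¹ • v₀) ↔ a ∈ Uα ∨ a * x₂⁻¹ ∈ Uα := by
  rw [IsCore, ← x₂_inv_smul_v₀, eq_inv_smul_iff, smul_smul, ← mem_stabilizer_iff,
    ← mem_stabilizer_iff, ← eq_stabilizer, inv_mem_iff, ← Uα.inv_mem_iff (x := x₂ * a⁻¹),
    mul_inv_rev, inv_inv]

lemma exists_eq_mul_x₂_zpow_mul_x₁_zpow_iff (a : FreeGroup (Fin 2)) :
    (∃ u ∈ Uα, ∃ ε ∈ ({0, 1} : Set ℤ), ∃ k : ℤ, a = u * x₂ ^ ε * x₁ ^ k) ↔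
      a ∈ Uα ∨ a * x₂⁻¹ ∈ Uα := by
  constructor
  · rintro ⟨u, hu, ε, rfl | rfl, k, rfl⟩
    · left
      simpa using Uα.mul_mem hu (Uα.zpow_mem x₁_mem k)
    · right
      have hconj : u * x₂ ^ (1 : ℤ) * x₁ ^ k * x₂⁻¹ = u * (x₂ * x₁ * x₂⁻¹) ^ k := by
        rw [conj_zpow, zpow_one]
        group
      rw [hconj]
      exact Uα.mul_mem hu (Uα.zpow_mem x₂_mul_x₁_mul_x₂_inv_mem k)
  · rintro (h | h)
    · exact ⟨a, h, 0, by simp, 0, by simp⟩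
    · exact ⟨a * x₂⁻¹, h, 1, by simp, 0, by simp⟩

end Uα

open Uα MulAction in
/-- `a⟨x₁⟩a⁻¹ ∩ U_α` is nontrivial iff `a = u·x₂^ε·x₁^k` with `u ∈ U_α`, `ε ∈ {0,1}`, `k ∈ ℤ`. -/
theorem conj_zpowers_x1_inter_Ualpha_nontrivial_iff (a : FreeGroup (Fin 2)) :
    Subgroup.map ((MulAut.conj a).toMonoidHom) (Subgroup.zpowers x₁) ⊓ Uα ≠ ⊥ ↔
      ∃ u ∈ Uα, ∃ ε ∈ ({0, 1} : Set ℤ), ∃ k : ℤ, a = u * x₂ ^ ε * x₁ ^ k := by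
  calc _ ↔ Subgroup.zpowers x₁ ⊓ stabilizer _ (a⁻¹ • v₀) ≠ ⊥ := by
        rw [eq_stabilizer, map_conj_inf_stabilizer_ne_bot_iff]
    _ ↔ a ∈ Uα ∨ a * x₂⁻¹ ∈ Uα := by
        rw [zpowers_x₁_inf_stabilizer_ne_bot_iff, isCore_inv_smul_v₀_iff]
    _ ↔ _ := (exists_eq_mul_x₂_zpow_mul_x₁_zpow_iff a).symm
end

section
/- In the free group F(x₁, x₂), the subgroup U_α = ⟨x₁, x₂x₁⁻¹x₂⁻¹⟩ is self-normalizing: its normalizer in F(x₁,x₂) equals U_α itself. -/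
open FreeGroup

/-!
`Uα` is the stabilizer of a point `p` in an explicit model of the coset space `F ⧸ Uα`, and `p`
is the only point fixed by `Uα`. If `g` normalizes `Uα`, then `g • p` is fixed by
`g Uα g⁻¹ = Uα`, so `g • p = p` and `g ∈ Uα`.

The model: the normal closure of `x₁` is free on `aₖ = x₂ᵏ x₁ x₂⁻ᵏ` (`k ∈ ℤ`) and `Uα = ⟨a₀, a₁⟩`,
so every coset is `x₂ᵏ w Uα` for a unique `k` and a unique reduced word `w` in the `aₖ` that does
not end in `a₀^±1` or `a₁^±1`. The stabilizer of `p = (0, [])` lies in `Uα` because the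
representative map `(k, w) ↦ x₂ᵏ w` is equivariant modulo `Uα`.
-/

section
variable {G X : Type*} [Group G] [MulAction G X]

/-- The `g` with which `x ↦ s x * H` commutes. -/
def Subgroup.equivariantSubgroup (H : Subgroup G) (s : X → G) : Subgroup G where
  carrier := {g | ∀ x, (s (g • x))⁻¹ * g * s x ∈ H}
  one_mem' x := by simp
  mul_mem' {g g'} hg hg' x := by
    convert H.mul_mem (hg (g' • x)) (hg' x) using 1
    rw [mul_smul]
    group
  inv_mem' {g} hg x := by
    convert H.inv_mem (hg (g⁻¹ • x)) using 1
    rw [smul_inv_smul]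
    group

theorem MulAction.stabilizer_le_of_equivariantSubgroup_eq_top {H : Subgroup G} {s : X → G}
    (hs : H.equivariantSubgroup s = ⊤) {p : X} (hp : s p ∈ H) : stabilizer G p ≤ H := by
  intro g hg
  have hconj : (s p)⁻¹ * g * s p ∈ H := by
    have hg' : g ∈ H.equivariantSubgroup s := hs ▸ Subgroup.mem_top g
    simpa only [mem_stabilizer_iff.mp hg] using hg' p
  convert H.mul_mem (H.mul_mem hp hconj) (H.inv_mem hp) using 1
  group

theorem MulAction.normalizer_le_stabilizer_of_unique_fixed {H : Subgroup G} {p : X}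
    (hHp : H ≤ stabilizer G p) (huniq : ∀ x : X, (∀ h ∈ H, h • x = x) → x = p) :
    Subgroup.normalizer (H : Set G) ≤ stabilizer G p := by
  intro g hg
  refine huniq _ fun h hh => ?_
  have : g⁻¹ * h * g ∈ H := (Subgroup.mem_normalizer_iff''.mp hg h).mp hh
  rw [← inv_smul_eq_iff, ← mul_smul, ← mul_smul]
  exact hHp this

end

namespace UαCoset

/-- `(k, true)` and `(k, false)` stand for `aₖ = x₂ᵏ x₁ x₂⁻ᵏ` and `aₖ⁻¹`. -/
abbrev Letter := ℤ × Bool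

namespace Letter

def inv (a : Letter) : Letter := (a.1, !a.2)

@[simp] lemma inv_inv (a : Letter) : a.inv.inv = a := by simp [inv]

def IsBasic (a : Letter) : Prop := a.1 = 0 ∨ a.1 = 1

instance : DecidablePred IsBasic := fun a => inferInstanceAs (Decidable (a.1 = 0 ∨ a.1 = 1))

@[simp] lemma isBasic_inv (a : Letter) : a.inv.IsBasic ↔ a.IsBasic := Iff.rfl

noncomputable def toFreeGroup (a : Letter) : FreeGroup (Fin 2) :=
  x₂ ^ a.1 * (if a.2 then x₁ else x₁⁻¹) * x₂ ^ (-a.1)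

lemma toFreeGroup_inv (a : Letter) : a.inv.toFreeGroup = a.toFreeGroup⁻¹ := by
  obtain ⟨k, _ | _⟩ := a <;> simp [toFreeGroup, inv] <;> group

lemma toFreeGroup_mem_of_isBasic {a : Letter} (ha : a.IsBasic) : a.toFreeGroup ∈ Uα := by
  have hx₁ : x₁ ∈ Uα := Subgroup.subset_closure (by simp)
  have hw : x₂ * x₁⁻¹ * x₂⁻¹ ∈ Uα := Subgroup.subset_closure (by simp)
  obtain ⟨k, _ | _⟩ := a <;> rcases ha with (rfl | rfl : k = 0 ∨ k = 1)
  · simpa [toFreeGroup] using hx₁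
  · simpa [toFreeGroup] using hw
  · simpa [toFreeGroup] using hx₁
  · simpa [toFreeGroup, mul_assoc] using Uα.inv_mem hw

end Letter

/-- Normal forms of the cosets `w ⟨a₀, a₁⟩` in the free group on the `aₖ`. -/
def IsNormal (l : List Letter) : Prop :=
  l.IsChain (fun a b => b ≠ a.inv) ∧ ∀ a ∈ l.getLast?, ¬a.IsBasic

def prepend (a : Letter) : List Letter → List Letter
  | [] => if a.IsBasic then [] else [a]
  | b :: l => if b = a.inv then l else a :: b :: l

lemma isNormal_prepend (a : Letter) {l : List Letter} (hl : IsNormal l) :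
    IsNormal (prepend a l) := by
  rcases l with _ | ⟨b, l⟩
  · by_cases ha : a.IsBasic <;> simp [prepend, ha, IsNormal]
  · by_cases hb : b = a.inv
    · simp only [prepend, hb, if_true]
      refine ⟨hl.1.tail, fun c hc => hl.2 c ?_⟩
      rcases l with _ | ⟨d, l⟩
      · simp at hc
      · simpa using hc
    · simp only [prepend, hb, if_false]
      exact ⟨List.isChain_cons_cons.mpr ⟨hb, hl.1⟩, by simpa using hl.2⟩

lemma prepend_prepend_inv (a : Letter) {l : List Letter} (hl : IsNormal l) :
    prepend a (prepend a.inv l) = l := by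
  rcases l with _ | ⟨b, l⟩
  · by_cases ha : a.IsBasic <;> simp [prepend, ha]
  · by_cases hb : b = a
    · subst hb
      rcases l with _ | ⟨c, l⟩
      · have : ¬b.IsBasic := hl.2 b (by simp)
        simp [prepend, this]
      · have : c ≠ b.inv := (List.isChain_cons_cons.mp hl.1).1
        simp [prepend, this]
    · simp [prepend, hb]

lemma prepend_eq_self_iff {a : Letter} {l : List Letter} :
    prepend a l = l ↔ l = [] ∧ a.IsBasic := by
  rcases l with _ | ⟨b, l⟩
  · by_cases ha : a.IsBasic <;> simp [prepend, ha]
  · refine iff_of_false (fun h => ?_) (by simp)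
    have := congrArg List.length h
    simp only [prepend] at this
    split_ifs at this <;> simp at this

abbrev NormalWord := {l : List Letter // IsNormal l}

def prependPerm (a : Letter) : Equiv.Perm NormalWord where
  toFun w := ⟨prepend a w.1, isNormal_prepend a w.2⟩
  invFun w := ⟨prepend a.inv w.1, isNormal_prepend a.inv w.2⟩
  left_inv w := Subtype.ext (by simpa using prepend_prepend_inv a.inv w.2)
  right_inv w := Subtype.ext (prepend_prepend_inv a w.2)

@[simp] lemma coe_prependPerm (a : Letter) (w : NormalWord) :
    (prependPerm a w).1 = prepend a w.1 := rfl

abbrev Coset := ℤ × NormalWord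

/-- `x₁ x₂ᵏ = x₂ᵏ a₋ₖ`. -/
def permX₁ : Equiv.Perm Coset := Equiv.prodShear (Equiv.refl ℤ) fun k => prependPerm (-k, true)

def permX₂ : Equiv.Perm Coset := Equiv.prodCongr (Equiv.addRight 1) (Equiv.refl _)

noncomputable instance : MulAction (FreeGroup (Fin 2)) Coset :=
  MulAction.compHom _ (FreeGroup.lift ![permX₁, permX₂])

lemma x₁_smul (v : Coset) : x₁ • v = (v.1, prependPerm (-v.1, true) v.2) := by
  simp [x₁, MulAction.compHom_smul_def, permX₁]

lemma x₂_smul (v : Coset) : x₂ • v = (v.1 + 1, v.2) := by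
  simp [x₂, MulAction.compHom_smul_def, permX₂, Prod.map]

noncomputable def evalWord (l : List Letter) : FreeGroup (Fin 2) := (l.map Letter.toFreeGroup).prod

lemma evalWord_prepend_mem (a : Letter) (l : List Letter) :
    (evalWord (prepend a l))⁻¹ * (a.toFreeGroup * evalWord l) ∈ Uα := by
  rcases l with _ | ⟨b, l⟩
  · by_cases ha : a.IsBasic
    · simpa [prepend, ha, evalWord] using Letter.toFreeGroup_mem_of_isBasic ha
    · simp [prepend, ha, evalWord]
  · by_cases hb : b = a.inv
    · subst hb
      simp [prepend, evalWord, Letter.toFreeGroup_inv]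
    · simp [prepend, hb, evalWord]

noncomputable def cosetRep (v : Coset) : FreeGroup (Fin 2) := x₂ ^ v.1 * evalWord v.2.1

lemma equivariantSubgroup_cosetRep_eq_top : Uα.equivariantSubgroup cosetRep = ⊤ := by
  rw [eq_top_iff, ← closure_range_of, Subgroup.closure_le]
  rintro _ ⟨i, rfl⟩ v
  fin_cases i
  · change (cosetRep (x₁ • v))⁻¹ * x₁ * cosetRep v ∈ Uα
    convert evalWord_prepend_mem (-v.1, true) v.2.1 using 1
    simp only [x₁_smul, cosetRep, coe_prependPerm, Letter.toFreeGroup, neg_neg, if_true]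
    group
  · change (cosetRep (x₂ • v))⁻¹ * x₂ * cosetRep v ∈ Uα
    convert Uα.one_mem using 1
    simp only [x₂_smul, cosetRep]
    group

def basePoint : Coset := (0, ⟨[], by simp [IsNormal]⟩)

lemma cosetRep_basePoint : cosetRep basePoint = 1 := by
  simp [cosetRep, basePoint, evalWord]

lemma x₂_inv_smul (v : Coset) : x₂⁻¹ • v = (v.1 - 1, v.2) := by
  rw [inv_smul_eq_iff, x₂_smul, sub_add_cancel]

lemma x₁_smul_eq_self_iff (v : Coset) :
    x₁ • v = v ↔ v.2.1 = [] ∧ (v.1 = 0 ∨ v.1 = -1) := by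
  rw [x₁_smul, Prod.ext_iff, Subtype.ext_iff, coe_prependPerm, prepend_eq_self_iff]
  simp only [Letter.IsBasic, true_and]
  exact and_congr_right fun _ => by omega

lemma conj_x₁_inv_smul_eq_self_iff (v : Coset) :
    (x₂ * x₁⁻¹ * x₂⁻¹) • v = v ↔ v.2.1 = [] ∧ (v.1 = 1 ∨ v.1 = 0) := by
  rw [mul_smul, mul_smul, smul_eq_iff_eq_inv_smul, inv_smul_eq_iff, eq_comm, x₁_smul_eq_self_iff,
    x₂_inv_smul]
  exact and_congr_right fun _ => by omega

lemma le_stabilizer_basePoint : Uα ≤ MulAction.stabilizer _ basePoint := by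
  rw [Uα, Subgroup.closure_le]
  rintro _ (rfl | rfl) <;>
    simp [x₁_smul_eq_self_iff, conj_x₁_inv_smul_eq_self_iff, basePoint]

lemma eq_basePoint_of_forall_smul_eq_self (v : Coset) (hv : ∀ u ∈ Uα, u • v = v) :
    v = basePoint := by
  obtain ⟨hnil, hk₁⟩ := (x₁_smul_eq_self_iff v).mp (hv _ (Subgroup.subset_closure (by simp)))
  obtain ⟨-, hk₂⟩ := (conj_x₁_inv_smul_eq_self_iff v).mp (hv _ (Subgroup.subset_closure (by simp)))
  exact Prod.ext (show v.1 = 0 by omega) (Subtype.ext hnil)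

end UαCoset

open MulAction UαCoset in
/-- `U_α` is self-normalizing in the free group on two generators. -/
theorem Ualpha_self_normalizing : Subgroup.normalizer (Uα : Set (FreeGroup (Fin 2))) = Uα := by
  have hstab : stabilizer (FreeGroup (Fin 2)) basePoint ≤ Uα :=
    stabilizer_le_of_equivariantSubgroup_eq_top equivariantSubgroup_cosetRep_eq_top
      (cosetRep_basePoint ▸ Uα.one_mem)
  have hnorm := normalizer_le_stabilizer_of_unique_fixed le_stabilizer_basePoint
    eq_basePoint_of_forall_smul_eq_self
  exact le_antisymm (hnorm.trans hstab) Subgroup.le_normalizer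
end

section
/- In the free group F(x₁, x₂), the subgroup U_ω = ⟨x₂, x₂x₁⁻¹x₂⁻¹x₁x₂⁻¹⟩ is self-normalizing: its normalizer in F(x₁,x₂) equals U_ω itself. -/
open FreeGroup

noncomputable def Uω : Subgroup (FreeGroup (Fin 2)) :=
  Subgroup.closure {x₂, x₂ * x₁⁻¹ * x₂⁻¹ * x₁ * x₂⁻¹}

/-!
With `aₙ = x₁⁻ⁿ x₂ x₁ⁿ` we have `Uω = ⟨a₀, a₁⟩`. The free group acts on pairs `(m, w)`, where
`w` is a freely reduced word in the letters `aₙ^{±1}` whose last letter is not `a₀^{±1}` or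
`a₁^{±1}`: `x₁` shifts `m`, and `x₂` multiplies `w` on the left by `aₘ`, cancelling a final
`a₀^{±1}` or `a₁^{±1}` into the coset. The point `(m, w)` is the coset `x₁ᵐ w Uω`; the Schreier
representatives `x₁ᵐ w` show that `Uω` is the stabilizer of `(0, [])`, and `aₙ` fixes `(m, w)`
only when `w = []` and `m + n ∈ {0, 1}`, so `(0, [])` is the only point fixed by `Uω`. An element
normalizing `Uω` moves `(0, [])` to a point fixed by `Uω`, hence stabilizes it.
-/

section SchreierArgument

open MulAction Subgroup

variable {G X : Type*} [Group G] [MulAction G X]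

theorem stabilizer_le_of_schreier_mem {S : Set G} (hS : closure S = ⊤) {H : Subgroup G}
    (rep : X → G) {p : X} (hp : rep p = 1)
    (hrep : ∀ s ∈ S, ∀ q, (rep (s • q))⁻¹ * s * rep q ∈ H) : stabilizer G p ≤ H := by
  let K : Subgroup G :=
    { carrier := {g | ∀ q, (rep (g • q))⁻¹ * g * rep q ∈ H}
      one_mem' := fun q => by simp
      mul_mem' := fun {g g'} hg hg' q => by
        simpa [mul_smul, mul_assoc] using H.mul_mem (hg (g' • q)) (hg' q)
      inv_mem' := fun {g} hg q => by
        simpa [mul_assoc] using H.inv_mem (hg (g⁻¹ • q)) }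
  have hK : K = ⊤ := eq_top_mono (closure_le K |>.mpr hrep) hS
  intro g hg
  have := (hK ▸ mem_top g : g ∈ K) p
  rwa [mem_stabilizer_iff.mp hg, hp, inv_one, one_mul, mul_one] at this

theorem normalizer_eq_self_of_stabilizer_eq {H : Subgroup G} {p : X}
    (hp : stabilizer G p = H) (hfix : ∀ q : X, (∀ h ∈ H, h • q = q) → q = p) :
    normalizer (H : Set G) = H := by
  refine le_antisymm (fun g hg => ?_) le_normalizer
  rw [← hp, mem_stabilizer_iff]
  refine hfix _ fun h hh => ?_
  have hconj : g⁻¹ * h * g ∈ stabilizer G p := hp ▸ (mem_normalizer_iff''.mp hg h).mp hh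
  calc h • g • p = g • (g⁻¹ * h * g) • p := by simp [mul_smul]
    _ = g • p := by rw [mem_stabilizer_iff.mp hconj]

end SchreierArgument

namespace Uomega

open Subgroup MulAction

abbrev Word := List (ℤ × Bool)

def push (x : ℤ × Bool) : Word → Word
  | [] => if x.1 = 0 ∨ x.1 = 1 then [] else [x]
  | y :: t => if y = (x.1, !x.2) then t else x :: y :: t

def IsNormal : Word → Prop
  | [] => True
  | [(n, _)] => n ≠ 0 ∧ n ≠ 1
  | x :: y :: t => y ≠ (x.1, !x.2) ∧ IsNormal (y :: t)

theorem IsNormal.tail {x : ℤ × Bool} : ∀ {w : Word}, IsNormal (x :: w) → IsNormal w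
  | [], _ => trivial
  | _ :: _, h => h.2

theorem IsNormal.push (x : ℤ × Bool) : ∀ {w : Word}, IsNormal w → IsNormal (push x w)
  | [], _ => by
    rw [Uomega.push]
    split_ifs with hx
    · trivial
    · exact not_or.mp hx
  | y :: t, h => by
    rw [Uomega.push]
    split_ifs with hy
    · exact h.tail
    · exact ⟨hy, h⟩

theorem push_push (n : ℤ) (b : Bool) :
    ∀ {w : Word}, IsNormal w → push (n, !b) (push (n, b) w) = w
  | [], _ => by
    by_cases hn : n = 0 ∨ n = 1 <;> simp [push, hn]
  | [(m, c)], h => by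
    by_cases hy : (m, c) = (n, !b)
    · obtain ⟨rfl, rfl⟩ := Prod.mk.inj hy
      simp_all [push, IsNormal]
    · simp [push, hy]
  | (m, c) :: z :: t, h => by
    by_cases hy : (m, c) = (n, !b)
    · obtain ⟨rfl, rfl⟩ := Prod.mk.inj hy
      have hz : z ≠ (m, b) := by simpa using h.1
      simp [push, hz]
    · simp [push, hy]

theorem push_eq_self_iff {x : ℤ × Bool} {w : Word} :
    push x w = w ↔ w = [] ∧ (x.1 = 0 ∨ x.1 = 1) := by
  cases w with
  | nil => by_cases hx : x.1 = 0 ∨ x.1 = 1 <;> simp [push, hx]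
  | cons y t =>
    simp only [push, reduceCtorEq, false_and, iff_false]
    split_ifs
    · exact List.ne_cons_self
    · exact List.cons_ne_self _ _

abbrev NormalWord : Type := {w : Word // IsNormal w}

def pushEquiv (n : ℤ) : Equiv.Perm NormalWord where
  toFun w := ⟨push (n, true) w.1, w.2.push _⟩
  invFun w := ⟨push (n, false) w.1, w.2.push _⟩
  left_inv w := Subtype.ext (push_push n true w.2)
  right_inv w := Subtype.ext (push_push n false w.2)

abbrev Model : Type := ℤ × NormalWord

def shift : Equiv.Perm Model := (Equiv.addRight 1).prodCongr (Equiv.refl _)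

def action : FreeGroup (Fin 2) →* Equiv.Perm Model :=
  FreeGroup.lift ![shift, Equiv.prodShear (Equiv.refl ℤ) pushEquiv]

instance : MulAction (FreeGroup (Fin 2)) Model := MulAction.compHom _ action

theorem x₁_smul (p : Model) : x₁ • p = (p.1 + 1, p.2) := by
  change action x₁ p = _
  simp [action, x₁, shift, Prod.map]

theorem x₂_smul (p : Model) : x₂ • p = (p.1, pushEquiv p.1 p.2) := by
  change action x₂ p = _
  simp [action, x₂]

theorem x₁_zpow_smul (k : ℤ) (p : Model) : x₁ ^ k • p = (p.1 + k, p.2) := by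
  induction k using Int.induction_on generalizing p with
  | zero => simp
  | succ k ih =>
    rw [zpow_add_one, mul_smul, x₁_smul, ih]
    congr 1; ring
  | pred k ih =>
    have hinv : x₁⁻¹ • p = (p.1 - 1, p.2) := inv_smul_eq_iff.mpr (by simp [x₁_smul])
    rw [zpow_sub_one, mul_smul, hinv, ih]
    congr 1; ring

noncomputable def a (n : ℤ) : FreeGroup (Fin 2) := x₁ ^ (-n) * x₂ * x₁ ^ n

theorem a_smul (n : ℤ) (p : Model) : a n • p = (p.1, pushEquiv (p.1 + n) p.2) := by
  rw [a, mul_smul, mul_smul, x₁_zpow_smul, x₂_smul, x₁_zpow_smul]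
  simp

theorem a_smul_eq_self_iff {n : ℤ} {p : Model} :
    a n • p = p ↔ p.2.1 = [] ∧ (p.1 + n = 0 ∨ p.1 + n = 1) := by
  rw [a_smul, Prod.ext_iff, Subtype.ext_iff]
  exact (and_iff_right rfl).trans push_eq_self_iff

theorem Uω_eq_closure : Uω = closure {a 0, a 1} := by
  have ha₀ : a 0 = x₂ := by simp [a]
  have ha₁ : a 1 = x₁⁻¹ * x₂ * x₁ := by simp [a]
  apply le_antisymm <;> rw [Uω, closure_le, Set.pair_subset_iff]
  · have h₀ : a 0 ∈ closure {a 0, a 1} := subset_closure (by simp)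
    have h₁ : a 1 ∈ closure {a 0, a 1} := subset_closure (by simp)
    have ht : x₂ * x₁⁻¹ * x₂⁻¹ * x₁ * x₂⁻¹ = a 0 * (a 1)⁻¹ * (a 0)⁻¹ := by
      rw [ha₀, ha₁]; group
    refine ⟨ha₀ ▸ h₀, ?_⟩
    rw [ht]
    exact mul_mem (mul_mem h₀ (inv_mem h₁)) (inv_mem h₀)
  · have h₀ : x₂ ∈ Uω := subset_closure (by simp)
    have ht : x₂ * x₁⁻¹ * x₂⁻¹ * x₁ * x₂⁻¹ ∈ Uω := subset_closure (by simp)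
    have ha₁' : a 1 = x₂⁻¹ * (x₂ * x₁⁻¹ * x₂⁻¹ * x₁ * x₂⁻¹)⁻¹ * x₂ := by
      rw [ha₁]; group
    refine ⟨ha₀ ▸ h₀, ?_⟩
    rw [ha₁']
    exact mul_mem (mul_mem (inv_mem h₀) (inv_mem ht)) h₀

def basePoint : Model := (0, ⟨[], trivial⟩)

theorem Uω_le_stabilizer : Uω ≤ stabilizer (FreeGroup (Fin 2)) basePoint := by
  rw [Uω_eq_closure, closure_le, Set.pair_subset_iff]
  exact ⟨a_smul_eq_self_iff.mpr (by simp [basePoint]),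
    a_smul_eq_self_iff.mpr (by simp [basePoint])⟩

theorem eq_basePoint_of_fixed :
    ∀ {p : Model}, (∀ u ∈ Uω, u • p = p) → p = basePoint
  | (m, ⟨w, _⟩), hp => by
    rw [Uω_eq_closure] at hp
    obtain ⟨hw, hm₀⟩ := a_smul_eq_self_iff.mp (hp (a 0) (subset_closure (by simp)))
    obtain ⟨-, hm₁⟩ := a_smul_eq_self_iff.mp (hp (a 1) (subset_closure (by simp)))
    obtain rfl : m = 0 := by omega
    obtain rfl : w = [] := hw
    rfl

noncomputable def letter (x : ℤ × Bool) : FreeGroup (Fin 2) :=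
  a x.1 ^ (if x.2 then 1 else -1 : ℤ)

noncomputable def evalWord (w : Word) : FreeGroup (Fin 2) := (w.map letter).prod

theorem letter_flip (x : ℤ × Bool) : letter (x.1, !x.2) = (letter x)⁻¹ := by
  obtain ⟨n, _ | _⟩ := x <;> simp [letter]

theorem letter_mem {x : ℤ × Bool} (hx : x.1 = 0 ∨ x.1 = 1) : letter x ∈ Uω := by
  rw [letter, Uω_eq_closure]
  exact zpow_mem (subset_closure (by rcases hx with h | h <;> simp [h])) _

theorem evalWord_cons (x : ℤ × Bool) (w : Word) :
    evalWord (x :: w) = letter x * evalWord w := by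
  simp [evalWord]

theorem evalWord_push_mem (x : ℤ × Bool) (w : Word) :
    (evalWord (push x w))⁻¹ * letter x * evalWord w ∈ Uω := by
  cases w with
  | nil =>
    by_cases hx : x.1 = 0 ∨ x.1 = 1
    · simpa [push, hx, evalWord] using letter_mem hx
    · simp [push, hx, evalWord]
  | cons y t =>
    by_cases hy : y = (x.1, !x.2)
    · simp [push, hy, evalWord_cons, letter_flip]
    · simp [push, hy, evalWord_cons]

noncomputable def rep (p : Model) : FreeGroup (Fin 2) := x₁ ^ p.1 * evalWord p.2.1

theorem stabilizer_basePoint : stabilizer (FreeGroup (Fin 2)) basePoint = Uω := by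
  refine le_antisymm (stabilizer_le_of_schreier_mem (FreeGroup.closure_range_of _) rep
    (by simp [rep, basePoint, evalWord]) ?_) Uω_le_stabilizer
  simp only [Set.forall_mem_range, Fin.forall_fin_two]
  refine ⟨fun p => ?_, fun p => ?_⟩
  · have : (rep (x₁ • p))⁻¹ * x₁ * rep p = 1 := by
      rw [rep, rep, x₁_smul, zpow_add_one]; group
    exact this ▸ one_mem _
  · have hx₂ : x₂ * x₁ ^ p.1 = x₁ ^ p.1 * letter (p.1, true) := by
      simp [letter, a]; group
    have : (rep (x₂ • p))⁻¹ * x₂ * rep p =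
        (evalWord (push (p.1, true) p.2.1))⁻¹ * letter (p.1, true) * evalWord p.2.1 := by
      rw [rep, rep, x₂_smul, mul_assoc _ x₂, ← mul_assoc x₂, hx₂]
      simp [pushEquiv, mul_assoc]
    exact this ▸ evalWord_push_mem _ _

end Uomega

/-- `U_ω` is self-normalizing in the free group on two generators. -/
theorem Uomega_self_normalizing : Subgroup.normalizer (Uω : Set (FreeGroup (Fin 2))) = Uω :=
  normalizer_eq_self_of_stabilizer_eq Uomega.stabilizer_basePoint
    fun _ => Uomega.eq_basePoint_of_fixed
end

section
/- Let G = F(x₁,…,x_n) ⋊ ⟨t⟩ where t acts on the free group by t x_i t⁻¹ = x_{τ(i)} for an n-cycle τ ∈ S_n (the cable space case). If g ∈ G satisfies g x₁ g⁻¹ = x₁, then g ∈ ⟨x₁, t^n⟩. -/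
/-!
Write `g = w t^k`. Conjugating `x₁` by `g` gives `w x_{τ^k(1)} w⁻¹`, so `x_{τ^k(1)}` is conjugate
to `x₁` in the free group; abelianizing shows `τ^k(1) = 1`, and since `τ` is an `n`-cycle this means
`n ∣ k`. Then `w` commutes with the generator `x₁`, and in a free group the centralizer of a
generator is the cyclic group it generates, so `w` is a power of `x₁`.
-/

open FreeGroup SemidirectProduct

namespace FreeGroup

variable {X : Type*}

theorem isConj_of_iff {a b : X} : IsConj (of a) (of b) ↔ a = b := by
  refine ⟨fun h => ?_, fun h => h ▸ IsConj.refl _⟩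
  have := isConj_iff_eq.mp
    ((FreeGroup.lift fun x => Multiplicative.ofAdd (FreeAbelianGroup.of x)).map_isConj h)
  simpa using FreeAbelianGroup.of_injective (by simpa using this)

def freeGroupCongrHom : Equiv.Perm X →* MulAut (FreeGroup X) where
  toFun := freeGroupCongr
  map_one' := freeGroupCongr_refl
  map_mul' σ τ := (freeGroupCongr_trans τ σ).symm

theorem mulAut_zpow_apply_of {α : MulAut (FreeGroup X)} {τ : Equiv.Perm X}
    (hα : ∀ i, α (of i) = of (τ i)) (k : ℤ) (i : X) : (α ^ k) (of i) = of ((τ ^ k) i) := by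
  have : α = freeGroupCongrHom τ := MulEquiv.toMonoidHom_injective <|
    ext_hom _ _ fun i => (hα i).trans (freeGroupCongr_apply τ (of i)).symm
  rw [this, ← map_zpow]
  rfl

theorem mk_singleton_mem_zpowers (a : X) (s : Bool) : mk [(a, s)] ∈ Subgroup.zpowers (of a) := by
  cases s
  · exact inv_mem (Subgroup.mem_zpowers (of a))
  · exact Subgroup.mem_zpowers (of a)

section DecidableEq

variable [DecidableEq X]

theorem toWord_of_mul_of_head_ne {a b : X} {s : Bool} {L : List (X × Bool)} {w : FreeGroup X}
    (hw : w.toWord = (b, s) :: L) (hb : b ≠ a) : (of a * w).toWord = (a, true) :: w.toWord := by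
  rw [toWord_mul, toWord_of, hw]
  refine IsReduced.reduce_eq (isReduced_cons_cons.mpr ⟨fun h => absurd h.symm hb, ?_⟩)
  exact hw ▸ isReduced_toWord

theorem eq_mk_mul_of_toWord_eq_cons {x : X × Bool} {L : List (X × Bool)} {w : FreeGroup X}
    (hw : w.toWord = x :: L) : w = mk [x] * mk L ∧ (mk L).toWord = L := by
  refine ⟨by rw [← mk_toWord (x := w), hw, mul_mk]; rfl, ?_⟩
  rw [toWord_mk]
  exact (isReduced_toWord.infix (hw ▸ (List.suffix_cons x L).isInfix)).reduce_eq

end DecidableEq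

theorem centralizer_of (a : X) : Subgroup.centralizer {of a} = Subgroup.zpowers (of a) := by
  classical
  have hle : Subgroup.zpowers (of a) ≤ Subgroup.centralizer {of a} :=
    Subgroup.zpowers_le.mpr (Subgroup.mem_centralizer_singleton_iff.mpr rfl)
  refine le_antisymm (fun w hw => ?_) hle
  induction hlen : w.toWord.length using Nat.strong_induction_on generalizing w with
  | _ N ih =>
  rcases hL : w.toWord with _ | ⟨⟨b, s⟩, L⟩
  · rw [toWord_eq_nil_iff.mp hL]
    exact one_mem _
  by_cases hb : b = a
  · subst b
    obtain ⟨hw_eq, hL_red⟩ := eq_mk_mul_of_toWord_eq_cons hL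
    have hx := mk_singleton_mem_zpowers a s
    have hcent : mk L ∈ Subgroup.centralizer {of a} := by
      rw [show mk L = (mk [(a, s)])⁻¹ * w by rw [hw_eq, inv_mul_cancel_left]]
      exact mul_mem (inv_mem (hle hx)) hw
    rw [hw_eq]
    exact mul_mem hx (ih _ (by simp [← hlen, hL]) _ hcent (congrArg List.length hL_red))
  · -- `(a, true) :: w.toWord` is reduced, so it is a sublist of `w.toWord ++ [(a, true)]` of the
    -- same length, forcing `w.toWord` to start with `a`.
    exfalso
    have hsub := toWord_mul_sublist w (of a)
    rw [Subgroup.mem_centralizer_singleton_iff.mp hw, toWord_of_mul_of_head_ne hL hb, hL,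
      toWord_of] at hsub
    have := hsub.eq_of_length (by simp)
    simp only [List.cons_append, List.cons.injEq, Prod.mk.injEq] at this
    exact hb this.1.1.symm

end FreeGroup

theorem Equiv.Perm.IsCycle.zpow_apply_eq_self_iff {X : Type*} [Fintype X] [DecidableEq X]
    {τ : Equiv.Perm X} (hτ : τ.IsCycle) (hsupp : τ.support = Finset.univ) (x : X) {k : ℤ} :
    (τ ^ k) x = x ↔ (Fintype.card X : ℤ) ∣ k := by
  have hon := hτ.isCycleOn
  rw [← Equiv.Perm.coe_support_eq_set_support, hsupp] at hon
  exact hon.zpow_apply_eq (Finset.mem_univ x)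

theorem SemidirectProduct.mul_inl_mul_inv {N G : Type*} [Group N] [Group G] {φ : G →* MulAut N}
    (g : N ⋊[φ] G) (x : N) : g * inl x * g⁻¹ = inl (g.left * φ g.right x * g.left⁻¹) := by
  ext <;> simp

/-- In the cable space group `G = F(x₁,…,x_n) ⋊ ⟨t⟩`, where `t` acts by permuting the free
generators via an `n`-cycle `τ` (i.e. `t x_i t⁻¹ = x_{τ(i)}`), any element centralizing
`x₁` lies in the peripheral subgroup `⟨x₁, t^n⟩`. -/
theorem cable_space_centralizer_of_meridian
    (n : ℕ) (hn : 0 < n)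
    (τ : Equiv.Perm (Fin n)) (hτ : τ.IsCycle ∧ τ.support = Finset.univ)
    (α : MulAut (FreeGroup (Fin n)))
    (hα : ∀ i : Fin n, α (FreeGroup.of i) = FreeGroup.of (τ i))
    (g : FreeGroup (Fin n) ⋊[zpowersHom (MulAut (FreeGroup (Fin n))) α] Multiplicative ℤ)
    (hg : g * inl (FreeGroup.of (⟨0, hn⟩ : Fin n)) * g⁻¹
        = inl (FreeGroup.of (⟨0, hn⟩ : Fin n))) :
    g ∈ Subgroup.closure
        {inl (FreeGroup.of (⟨0, hn⟩ : Fin n)), inr (Multiplicative.ofAdd (n : ℤ))} := by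
  set x₁ : Fin n := ⟨0, hn⟩
  obtain ⟨w, z⟩ := g
  have hconj : w * of ((τ ^ z.toAdd) x₁) * w⁻¹ = of x₁ := by
    have := inl_injective ((mul_inl_mul_inv _ _).symm.trans hg)
    rwa [zpowersHom_apply, mulAut_zpow_apply_of hα] at this
  have hfix : (τ ^ z.toAdd) x₁ = x₁ := isConj_of_iff.mp (isConj_iff.mpr ⟨w, hconj⟩)
  rw [hfix, mul_inv_eq_iff_eq_mul] at hconj
  obtain ⟨m, rfl⟩ : w ∈ Subgroup.zpowers (of x₁) :=
    (centralizer_of x₁).le (Subgroup.mem_centralizer_singleton_iff.mpr hconj)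
  obtain ⟨q, hq⟩ := (hτ.1.zpow_apply_eq_self_iff hτ.2 x₁).mp hfix
  have hz : z = Multiplicative.ofAdd (n : ℤ) ^ q := by
    rw [← ofAdd_zsmul, smul_eq_mul, mul_comm, ← Fintype.card_fin n, ← hq, ofAdd_toAdd]
  rw [mk_eq_inl_mul_inr, hz, map_zpow, map_zpow]
  exact mul_mem (zpow_mem (Subgroup.subset_closure (Set.mem_insert _ _)) m)
    (zpow_mem (Subgroup.subset_closure (Set.mem_insert_of_mem _ (Set.mem_singleton _))) q)
end

section
/- Let F = F(x₁, x₂) and U_α = ⟨x₁, x₂x₁⁻¹x₂⁻¹⟩. Then for any a ∈ F, the intersection a⟨x₁⟩a⁻¹ ∩ U_α is either trivial or equal to all of a⟨x₁⟩a⁻¹. -/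
open FreeGroup

/-!
Membership in `U_α` is decided by its Stallings graph: a base vertex `v₀`, a second vertex `v₁`,
an `x₁`-loop at each of them and an `x₂`-edge `v₀ → v₁`; the reduced word of an element of `U_α`
reads a closed path at `v₀`. Write `a = p x₁ᵏ` with the reduced word of `p` not ending in `x₁^±1`.
For `n ≠ 0` the reduced word of `a x₁ⁿ a⁻¹ = p x₁ⁿ p⁻¹` is the concatenation `p · x₁ⁿ · p⁻¹`, so if
this element lies in `U_α`, then `p` reads a path from `v₀` to some vertex `v`. Then `p` lies in
`U_α` times the label of the spanning-tree path to `v`, and since `x₁` loops at `v`, also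
`p x₁ p⁻¹ = a x₁ a⁻¹` lies in `U_α`.
-/

namespace FreeGroup

variable {α : Type*} [DecidableEq α]

theorem toWord_of_zpow (i : α) (n : ℤ) :
    (of i ^ n).toWord = List.replicate n.natAbs (i, decide (0 ≤ n)) := by
  cases n with
  | ofNat m => simp [toWord_of_pow]
  | negSucc m =>
    rw [zpow_negSucc, toWord_inv, toWord_of_pow]
    simp [invRev, List.map_replicate]

omit [DecidableEq α] in
theorem isReduced_append_of_fst_ne {L₁ L₂ : List (α × Bool)} (h₁ : IsReduced L₁)
    (h₂ : IsReduced L₂) (h : ∀ x ∈ L₁.getLast?, ∀ y ∈ L₂.head?, x.1 ≠ y.1) :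
    IsReduced (L₁ ++ L₂) :=
  List.isChain_append.mpr ⟨h₁, h₂, fun x hx y hy hxy => absurd hxy (h x hx y hy)⟩

theorem toWord_mul_zpow_mul_inv {p : FreeGroup α} {i : α} {n : ℤ} (hn : n ≠ 0)
    (hp : ∀ x ∈ p.toWord.getLast?, x.1 ≠ i) :
    (p * of i ^ n * p⁻¹).toWord = p.toWord ++ (of i ^ n).toWord ++ p⁻¹.toWord := by
  have hpow : ∀ x ∈ (of i ^ n).toWord, x.1 = i := by
    simp +contextual [toWord_of_zpow, List.mem_replicate]
  have hinv : ∀ y ∈ p⁻¹.toWord.head?, y.1 ≠ i := by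
    intro y hy
    rw [toWord_inv, invRev, List.head?_reverse, List.getLast?_map] at hy
    obtain ⟨x, hx, rfl⟩ := Option.mem_map.mp hy
    exact hp x hx
  have hred : IsReduced (p.toWord ++ (of i ^ n).toWord ++ p⁻¹.toWord) := by
    refine .append_overlap ?_ ?_ (by simpa [toWord_of_zpow] using hn)
    · refine isReduced_append_of_fst_ne isReduced_toWord isReduced_toWord fun x hx y hy => ?_
      rw [hpow y (List.mem_of_mem_head? hy)]
      exact hp x hx
    · refine isReduced_append_of_fst_ne isReduced_toWord isReduced_toWord fun x hx y hy => ?_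
      rw [hpow x (List.mem_of_mem_getLast? hx)]
      exact (hinv y hy).symm
  rw [← hred.reduce_eq, ← toWord_mk, ← mul_mk, ← mul_mk, mk_toWord, mk_toWord, mk_toWord]

omit [DecidableEq α] in
theorem mk_mem_zpowers_of_forall_fst_eq {L : List (α × Bool)} {i : α} (h : ∀ x ∈ L, x.1 = i) :
    mk L ∈ Subgroup.zpowers (of i) := by
  induction L with
  | nil => exact one_mem _
  | cons x L ih =>
    rw [← List.singleton_append, ← mul_mk]
    refine mul_mem ?_ (ih fun y hy => h y (List.mem_cons_of_mem x hy))
    obtain ⟨j, b⟩ := x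
    obtain rfl : j = i := h _ List.mem_cons_self
    cases b
    · exact inv_mem (Subgroup.mem_zpowers (of j))
    · exact Subgroup.mem_zpowers (of j)

theorem exists_eq_mul_zpow_of_getLast_fst_ne (a : FreeGroup α) (i : α) :
    ∃ p : FreeGroup α, ∃ k : ℤ, a = p * of i ^ k ∧ ∀ x ∈ p.toWord.getLast?, x.1 ≠ i := by
  set P := a.toWord.rdropWhile (fun x => x.1 = i)
  set S := a.toWord.rtakeWhile (fun x => x.1 = i)
  have hS : mk S ∈ Subgroup.zpowers (of i) := by
    refine mk_mem_zpowers_of_forall_fst_eq fun x hx => ?_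
    simpa using List.mem_rtakeWhile_imp hx
  obtain ⟨k, hk⟩ := Subgroup.mem_zpowers_iff.mp hS
  refine ⟨mk P, k, ?_, ?_⟩
  · rw [hk, mul_mk, List.rdropWhile_append_rtakeWhile, mk_toWord]
  · have hP : (mk P).toWord = P := by
      rw [toWord_mk]
      exact (isReduced_toWord.infix (List.rdropWhile_prefix _ _).isInfix).reduce_eq
    rw [hP]
    intro x hx
    obtain ⟨hne, rfl⟩ := List.mem_getLast?_eq_getLast hx
    simpa using List.rdropWhile_last_not _ _ hne

end FreeGroup

/-- A deterministic graph with vertex set `Q` and edges labelled by `α`: `edge (i, true) s` is the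
end of the `i`-edge leaving `s`, and `edge (i, false) s` is the start of the `i`-edge entering
`s`. -/
structure FoldedGraph (α Q : Type*) where
  edge : α × Bool → Q → Option Q
  edge_inv : ∀ {l : α × Bool} {s t : Q}, edge l s = some t → edge (l.1, !l.2) t = some s

namespace FoldedGraph

variable {α Q : Type*} (G : FoldedGraph α Q)

def read : List (α × Bool) → Q → Option Q
  | [], s => some s
  | l :: w, s => (G.edge l s).bind (read w)

theorem read_append (w₁ w₂ : List (α × Bool)) (s : Q) :
    G.read (w₁ ++ w₂) s = (G.read w₁ s).bind (G.read w₂) := by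
  induction w₁ generalizing s with
  | nil => rfl
  | cons l w ih => simp [read, ih, Option.bind_assoc]

theorem read_invRev {w : List (α × Bool)} {s t : Q} (h : G.read w s = some t) :
    G.read (invRev w) t = some s := by
  induction w generalizing s with
  | nil => simpa [read, invRev, eq_comm] using h
  | cons l w ih =>
    obtain ⟨u, hu, hw⟩ := Option.bind_eq_some_iff.mp h
    rw [invRev_cons, read_append, ih hw]
    simpa [invRev, read] using G.edge_inv hu

theorem read_of_red {w w' : List (α × Bool)} {s t : Q} (hr : Red w w')
    (h : G.read w s = some t) : G.read w' s = some t := by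
  induction hr with
  | refl => exact h
  | tail _ hstep ih =>
    obtain @⟨L₁, L₂, x, b⟩ := hstep
    rw [read_append] at ih ⊢
    obtain ⟨u, hu, hL⟩ := Option.bind_eq_some_iff.mp ih
    obtain ⟨v, hv, hL⟩ := Option.bind_eq_some_iff.mp hL
    simpa [hu, read, G.edge_inv hv] using hL

theorem mul_mk_mul_inv_mem_of_read (H : Subgroup (FreeGroup α)) (label : Q → FreeGroup α)
    (hlabel : ∀ {l s t}, G.edge l s = some t → label s * FreeGroup.mk [l] * (label t)⁻¹ ∈ H)
    {w : List (α × Bool)} {s t : Q} (h : G.read w s = some t) :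
    label s * FreeGroup.mk w * (label t)⁻¹ ∈ H := by
  induction w generalizing s with
  | nil =>
    obtain rfl : s = t := Option.some_injective _ h
    simp [← one_eq_mk]
  | cons l w ih =>
    obtain ⟨u, hu, hw⟩ := Option.bind_eq_some_iff.mp h
    have hsplit : label s * FreeGroup.mk (l :: w) * (label t)⁻¹ =
        (label s * FreeGroup.mk [l] * (label u)⁻¹) * (label u * FreeGroup.mk w * (label t)⁻¹) := by
      rw [← List.singleton_append, ← mul_mk]
      group
    rw [hsplit]
    exact mul_mem (hlabel hu) (ih hw)

variable [DecidableEq α]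

def loopSubgroup (q : Q) : Subgroup (FreeGroup α) where
  carrier := {g | G.read g.toWord q = some q}
  one_mem' := rfl
  mul_mem' {g h} hg hh := by
    rw [Set.mem_ofPred_eq, toWord_mul]
    exact G.read_of_red reduce.red (by rw [read_append, hg]; exact hh)
  inv_mem' {g} hg := by
    rw [Set.mem_ofPred_eq, toWord_inv]
    exact G.read_invRev hg

theorem mem_loopSubgroup {q : Q} {g : FreeGroup α} :
    g ∈ G.loopSubgroup q ↔ G.read g.toWord q = some q := Iff.rfl

end FoldedGraph

namespace Uα

/-- The vertex `false` is the base vertex; `x₁` loops at both vertices and `x₂` goes from `false`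
to `true`. -/
def stallingsGraph : FoldedGraph (Fin 2) Bool where
  edge l s := if l.1 = 0 then some s else if s = l.2 then none else some l.2
  edge_inv := by decide

noncomputable def treeLabel : Bool → FreeGroup (Fin 2)
  | false => 1
  | true => x₂

theorem le_loopSubgroup : Uα ≤ stallingsGraph.loopSubgroup false := by
  rw [Uα, Subgroup.closure_le]
  rintro _ (rfl | rfl) <;> rw [SetLike.mem_coe, FoldedGraph.mem_loopSubgroup] <;> decide

theorem treeLabel_mul_mul_inv_mem {l : Fin 2 × Bool} {s t : Bool}
    (h : stallingsGraph.edge l s = some t) : treeLabel s * mk [l] * (treeLabel t)⁻¹ ∈ Uα := by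
  have h₁ : x₁ ∈ Uα := Subgroup.subset_closure (by simp)
  have h₂ : x₂ * x₁⁻¹ * x₂⁻¹ ∈ Uα := Subgroup.subset_closure (by simp)
  have hx₁ : mk [((0 : Fin 2), true)] = x₁ := rfl
  have hx₁' : mk [((0 : Fin 2), false)] = x₁⁻¹ := rfl
  have hx₂ : mk [((1 : Fin 2), true)] = x₂ := rfl
  have hx₂' : mk [((1 : Fin 2), false)] = x₂⁻¹ := rfl
  obtain ⟨i, b⟩ := l
  fin_cases i <;> cases b <;> cases s <;> cases t <;>
    simp only [stallingsGraph, treeLabel, hx₁, hx₁', hx₂, hx₂', Fin.isValue, Fin.zero_eta,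
      Fin.mk_one, one_ne_zero, ↓reduceIte, reduceCtorEq, Bool.false_eq_true, Bool.true_eq_false,
      Option.some.injEq, one_mul, mul_one, inv_one, mul_inv_cancel, one_mem] at h ⊢
  all_goals first | exact h₁ | exact h₂ | exact inv_mem h₁ | (convert inv_mem h₂ using 1; group)

theorem conj_x₁_mem_of_read {w : List (Fin 2 × Bool)} {s : Bool}
    (h : stallingsGraph.read w false = some s) : mk w * x₁ * (mk w)⁻¹ ∈ Uα := by
  have hw := stallingsGraph.mul_mk_mul_inv_mem_of_read Uα treeLabel treeLabel_mul_mul_inv_mem h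
  rw [treeLabel, one_mul] at hw
  have hloop : treeLabel s * x₁ * (treeLabel s)⁻¹ ∈ Uα :=
    treeLabel_mul_mul_inv_mem (l := (0, true)) rfl
  have hsplit : mk w * x₁ * (mk w)⁻¹ =
      (mk w * (treeLabel s)⁻¹) * (treeLabel s * x₁ * (treeLabel s)⁻¹) *
        (mk w * (treeLabel s)⁻¹)⁻¹ := by
    group
  rw [hsplit]
  exact mul_mem (mul_mem hw hloop) (inv_mem hw)

theorem conj_x₁_mem_of_conj_zpow_mem {a : FreeGroup (Fin 2)} {n : ℤ} (hn : n ≠ 0)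
    (h : a * x₁ ^ n * a⁻¹ ∈ Uα) : a * x₁ * a⁻¹ ∈ Uα := by
  obtain ⟨p, k, rfl, hp⟩ := exists_eq_mul_zpow_of_getLast_fst_ne a 0
  have hconj (m : ℤ) : p * of 0 ^ k * x₁ ^ m * (p * of 0 ^ k)⁻¹ = p * x₁ ^ m * p⁻¹ := by
    rw [x₁]
    group
  rw [hconj] at h
  rw [← zpow_one x₁, hconj, zpow_one]
  have hread := le_loopSubgroup h
  rw [FoldedGraph.mem_loopSubgroup, x₁, toWord_mul_zpow_mul_inv hn hp, List.append_assoc,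
    FoldedGraph.read_append] at hread
  obtain ⟨s, hs, -⟩ := Option.bind_eq_some_iff.mp hread
  simpa only [mk_toWord] using conj_x₁_mem_of_read hs

end Uα

/-- For any `a`, the intersection `a⟨x₁⟩a⁻¹ ∩ U_α` is either trivial or all of `a⟨x₁⟩a⁻¹`. -/
theorem conj_zpowers_x1_inter_Ualpha_dichotomy (a : FreeGroup (Fin 2)) :
    Subgroup.map ((MulAut.conj a).toMonoidHom) (Subgroup.zpowers x₁) ⊓ Uα = ⊥ ∨
      Subgroup.map ((MulAut.conj a).toMonoidHom) (Subgroup.zpowers x₁) ≤ Uα := by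
  have hconj (n : ℤ) : (MulAut.conj a).toMonoidHom (x₁ ^ n) = a * x₁ ^ n * a⁻¹ := rfl
  by_cases h : a * x₁ * a⁻¹ ∈ Uα
  · right
    rintro _ ⟨_, ⟨n, rfl⟩, rfl⟩
    rw [hconj, ← conj_zpow]
    exact zpow_mem h n
  · left
    rw [eq_bot_iff]
    rintro _ ⟨⟨_, ⟨n, rfl⟩, rfl⟩, hU⟩
    rw [hconj] at hU ⊢
    obtain rfl | hn := eq_or_ne n 0
    · simp
    · exact absurd (Uα.conj_x₁_mem_of_conj_zpow_mem hn hU) h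
end
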